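/- arXiv:1512.00653 — 5 statements merged into one kernel-verified Lean document; each statement's English description precedes it below -/
import Mathlib

section
/- Consider the two-player discrete NEP where player 1 minimizes θ_1(x^1,x^2) = (1/2)(x^1)² + x^1 x^2 − 9 x^1 over integers 0 ≤ x^1 ≤ 9, and player 2 minimizes θ_2(x^1,x^2) = (1/2)(x^2)² − x^1 x^2 over integers 0 ≤ x^2 ≤ 9. Then this game has no Nash equilibrium, even though the feasible set is compact and the operator F(x) = (x^1 + x^2 − 9, x^2 − x^1) is strongly monotone. -/
noncomputable def ex2θ1 (a b : ℤ) : ℝ :=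
  (1 / 2) * (a : ℝ) ^ 2 + (a : ℝ) * (b : ℝ) - 9 * (a : ℝ)

noncomputable def ex2θ2 (a b : ℤ) : ℝ :=
  (1 / 2) * (b : ℝ) ^ 2 - (a : ℝ) * (b : ℝ)

noncomputable def ex2F1 (x1 x2 : ℝ) : ℝ := x1 + x2 - 9
noncomputable def ex2F2 (x1 x2 : ℝ) : ℝ := x2 - x1

/-- Example 2: the operator `F` is strongly monotone and the feasible set is a
compact box, yet the discrete game has no Nash equilibrium. -/
theorem stmt4 :
    (∃ c : ℝ, 0 < c ∧ ∀ x1 x2 y1 y2 : ℝ,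
      c * ((x1 - y1) ^ 2 + (x2 - y2) ^ 2) ≤
        (ex2F1 x1 x2 - ex2F1 y1 y2) * (x1 - y1)
          + (ex2F2 x1 x2 - ex2F2 y1 y2) * (x2 - y2)) ∧
    ¬ ∃ a b : ℤ, 0 ≤ a ∧ a ≤ 9 ∧ 0 ≤ b ∧ b ≤ 9 ∧
      (∀ y : ℤ, 0 ≤ y → y ≤ 9 → ex2θ1 a b ≤ ex2θ1 y b) ∧
      (∀ y : ℤ, 0 ≤ y → y ≤ 9 → ex2θ2 a b ≤ ex2θ2 a y) := by
  constructor
  · exact ⟨1, one_pos, fun x1 x2 y1 y2 => by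
      simp only [ex2F1, ex2F2]; nlinarith [sq_nonneg (x1 - y1), sq_nonneg (x2 - y2)]⟩
  · rintro ⟨a, b, ha0, ha9, hb0, hb9, h1, h2⟩
    -- player 2 optimality at y = a forces b = a
    have hba : (b : ℝ) = a := by
      have := h2 a ha0 ha9
      simp only [ex2θ2] at this
      nlinarith [sq_nonneg ((b : ℝ) - a), this]
    -- player 1 optimality at y = 9 - a
    have h9a0 : (0 : ℤ) ≤ 9 - a := by omega
    have h9a9 : (9 : ℤ) - a ≤ 9 := by omega
    have := h1 (9 - a) h9a0 h9a9
    simp only [ex2θ1] at this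
    push_cast at this
    rw [hba] at this
    -- this says f(a) ≤ f(9-a), i.e. (1/2)(2a-9)^2 ≤ 0
    have hodd : (2 * (a : ℝ) - 9) ^ 2 ≥ 1 := by
      have h2a : (2 * a - 9 : ℤ) ≠ 0 := by omega
      have : (1 : ℤ) ≤ (2 * a - 9) ^ 2 := by
        rcases lt_or_gt_of_ne h2a with h | h <;> nlinarith
      calc (1 : ℝ) = ((1 : ℤ) : ℝ) := by norm_num
        _ ≤ (((2 * a - 9) ^ 2 : ℤ) : ℝ) := by exact_mod_cast this
        _ = (2 * (a : ℝ) - 9) ^ 2 := by push_cast; ring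
    nlinarith [this, hodd]
end

section
/- Let X = {x ∈ ℝ^n : l ≤ x ≤ u} with l, u ∈ ℤ^n, and let x̄ ∈ X ∩ ℤ^n be a solution of the continuous NEP. Let player ν and index i be such that: F^ν_i is a convex function, x̄^ν_i = l^ν_i, and for every player μ and index j with (μ,j) ≠ (ν,i), if ∂F^ν_i(x̄)/∂x^μ_j > 0 then x̄^μ_j = l^μ_j, and if ∂F^ν_i(x̄)/∂x^μ_j < 0 then x̄^μ_j = u^μ_j. If θ_ν is strictly convex with respect to x^ν_i, then any x̃ ∈ X ∩ ℤ^n with x̃^ν_i ≠ x̄^ν_i cannot be an equilibrium of the discrete NEP. -/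
open Finset

/-- Proposition 2(i): fixing a variable at its lower bound.  Variables are
flattened: `I` is the set of all variable indices and `player i` is the player
owning variable `i`.  `F i x` is the partial derivative of `θ (player i)` with
respect to coordinate `i`.  If `x̄ ∈ X ∩ ℤⁿ` solves the continuous NEP (via its
variational characterization), `F i` is convex, `x̄ i` is at its lower bound,
the sign conditions on the partial derivatives of `F i` at `x̄` hold, and
`θ (player i)` is strictly convex in coordinate `i`, then no integer feasible
point differing from `x̄` in coordinate `i` can be a discrete equilibrium. -/
theorem stmt7 {ι : Type*} [DecidableEq ι] {I : Type*} [Fintype I] [DecidableEq I]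
    (player : I → ι) (l u : I → ℤ)
    (θ : ι → (I → ℝ) → ℝ) (F : I → (I → ℝ) → ℝ)
    (hF : ∀ (j : I) (x : I → ℝ),
      HasDerivAt (fun t : ℝ => θ (player j) (Function.update x j t)) (F j x) (x j))
    (xb : I → ℤ) (hxb : ∀ j, l j ≤ xb j ∧ xb j ≤ u j)
    (hVI : ∀ ν, ∀ y : I → ℝ, (∀ j, (l j : ℝ) ≤ y j ∧ y j ≤ (u j : ℝ)) →
      0 ≤ ∑ j ∈ univ.filter (fun j => player j = ν),
            F j (fun t => (xb t : ℝ)) * (y j - (xb j : ℝ)))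
    (i : I)
    (hconv : ConvexOn ℝ Set.univ (F i))
    (hlow : xb i = l i)
    (D : (I → ℝ) →L[ℝ] ℝ) (hD : HasFDerivAt (F i) D (fun t => (xb t : ℝ)))
    (hpos : ∀ j, j ≠ i → 0 < D (Pi.single j 1) → xb j = l j)
    (hneg : ∀ j, j ≠ i → D (Pi.single j 1) < 0 → xb j = u j)
    (hstrict : ∀ x : I → ℝ,
      StrictConvexOn ℝ Set.univ (fun t : ℝ => θ (player i) (Function.update x i t)))
    (xt : I → ℤ) (hxt : ∀ j, l j ≤ xt j ∧ xt j ≤ u j) (hne : xt i ≠ xb i) :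
    ¬ (∀ ν, ∀ y : I → ℤ, (∀ j, l j ≤ y j ∧ y j ≤ u j) →
        (∀ j, player j ≠ ν → y j = xt j) →
        θ ν (fun t => (xt t : ℝ)) ≤ θ ν (fun t => (y t : ℝ))) := by
  intro heq
  classical
  set xbr : I → ℝ := fun t => (xb t : ℝ) with hxbr
  set xtr : I → ℝ := fun t => (xt t : ℝ) with hxtr
  -- basic order facts
  have hltZ : l i < xt i := lt_of_le_of_ne (hxt i).1 (Ne.symm (hlow ▸ hne))
  have hltR : (l i : ℝ) < xt i := by exact_mod_cast hltZ
  -- derivative of the i-section at any point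
  have hder : ∀ (x : I → ℝ) (s : ℝ),
      HasDerivAt (fun t : ℝ => θ (player i) (Function.update x i t))
        (F i (Function.update x i s)) s := by
    intro x s
    have h := hF i (Function.update x i s)
    simpa [Function.update_idem] using h
  -- Step B : F i xbr ≥ 0 via the VI
  have hFxb : 0 ≤ F i xbr := by
    set y : I → ℝ := Function.update xbr i (u i : ℝ) with hy
    have hyfeas : ∀ j, (l j : ℝ) ≤ y j ∧ y j ≤ (u j : ℝ) := by
      intro j
      by_cases hj : j = i
      · subst hj
        simp only [hy, Function.update_self]
        refine ⟨?_, le_refl _⟩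
        exact_mod_cast le_trans (le_of_lt hltZ) (hxt j).2
      · simp only [hy, Function.update_of_ne hj, hxbr]
        exact ⟨by exact_mod_cast (hxb j).1, by exact_mod_cast (hxb j).2⟩
    have hvi := hVI (player i) y hyfeas
    have hsum : ∑ j ∈ univ.filter (fun j => player j = player i),
        F j xbr * (y j - xbr j) = F i xbr * ((u i : ℝ) - (l i : ℝ)) := by
      have hmem : i ∈ univ.filter (fun j => player j = player i) :=
        Finset.mem_filter.mpr ⟨mem_univ i, rfl⟩
      rw [Finset.sum_eq_single_of_mem i hmem
        (fun b _ hb => by simp [hy, Function.update_of_ne hb])]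
      simp [hy, hxbr, hlow]
    rw [hsum] at hvi
    have hul : (l i : ℝ) < (u i : ℝ) := by
      exact_mod_cast lt_of_lt_of_le hltZ (hxt i).2
    nlinarith
  -- the two comparison points
  set a : ℝ := (xt i : ℝ) - 1 with ha
  set w : I → ℝ := Function.update xtr i a with hw
  set v : I → ℝ := Function.update xtr i (l i : ℝ) with hv
  have hla : (l i : ℝ) ≤ a := by
    have : (l i : ℤ) + 1 ≤ xt i := hltZ
    have : ((l i : ℝ)) + 1 ≤ (xt i : ℝ) := by exact_mod_cast this
    simp [ha]; linarith
  -- Step D : F i xbr + D (v - xbr) ≤ F i v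
  have hDv : F i xbr + D (v - xbr) ≤ F i v := by
    have hφc : ConvexOn ℝ Set.univ (fun t : ℝ => F i (xbr + t • (v - xbr))) := by
      have h := hconv.comp_affineMap (AffineMap.lineMap xbr v : ℝ →ᵃ[ℝ] (I → ℝ))
      have he : (fun t : ℝ => F i (xbr + t • (v - xbr)))
          = F i ∘ (AffineMap.lineMap xbr v : ℝ →ᵃ[ℝ] (I → ℝ)) := by
        funext t; simp [AffineMap.lineMap_apply, Function.comp]; ring_nf
      rw [he]
      simpa using h
    have hγ : HasDerivAt (fun t : ℝ => xbr + t • (v - xbr)) (v - xbr) 0 := by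
      simpa using ((hasDerivAt_id (0:ℝ)).smul_const (v - xbr)).const_add xbr
    have h0 : xbr + (0:ℝ) • (v - xbr) = xbr := by simp
    have hφ : HasDerivAt (fun t : ℝ => F i (xbr + t • (v - xbr))) (D (v - xbr)) 0 := by
      have := (h0 ▸ hD).comp_hasDerivAt 0 hγ
      exact this
    have hsl := hφc.le_slope_of_hasDerivAt (Set.mem_univ 0) (Set.mem_univ 1) one_pos hφ
    have : D (v - xbr) ≤ F i v - F i xbr := by
      have h1 : (fun t : ℝ => F i (xbr + t • (v - xbr))) 1 = F i v := by simp
      have h0' : (fun t : ℝ => F i (xbr + t • (v - xbr))) 0 = F i xbr := by simp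
      simpa [slope_def_field, h1, h0'] using hsl
    linarith
  -- Step E : 0 ≤ D (v - xbr)
  have hDnn : 0 ≤ D (v - xbr) := by
    have hsum : (v - xbr) = ∑ j, (v j - xbr j) • (Pi.single j (1:ℝ) : I → ℝ) := by
      funext k
      simp [Finset.sum_apply, Pi.single_apply]
    rw [hsum, map_sum]
    refine Finset.sum_nonneg fun j _ => ?_
    rw [map_smul, smul_eq_mul]
    by_cases hj : j = i
    · subst hj
      have : v j - xbr j = 0 := by simp [hv, hxbr, hlow]
      rw [this, zero_mul]
    · have hvj : v j = (xt j : ℝ) := by simp [hv, Function.update_of_ne hj, hxtr]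
      rcases lt_trichotomy (D (Pi.single j 1)) 0 with h | h | h
      · have hb : xb j = u j := hneg j hj h
        have : v j - xbr j ≤ 0 := by
          rw [hvj]; simp only [hxbr, hb]
          have := (hxt j).2
          simp; exact_mod_cast this
        nlinarith
      · rw [h, mul_zero]
      · have hb : xb j = l j := hpos j hj h
        have : 0 ≤ v j - xbr j := by
          rw [hvj]; simp only [hxbr, hb]
          have := (hxt j).1
          simp; exact_mod_cast this
        exact mul_nonneg this (le_of_lt h)
  -- Step C : F i v ≤ F i w, by monotonicity of the derivative of the strictly convex section
  have hvw : F i v ≤ F i w := by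
    rcases eq_or_lt_of_le hla with h | h
    · have : v = w := by rw [hv, hw, h]
      rw [this]
    · have h1 := (hstrict xtr).lt_slope_of_hasDerivAt (Set.mem_univ (l i : ℝ))
        (Set.mem_univ a) h (hder xtr (l i : ℝ))
      have h2 := (hstrict xtr).slope_lt_of_hasDerivAt (Set.mem_univ (l i : ℝ))
        (Set.mem_univ a) h (hder xtr a)
      rw [hv, hw]
      exact le_of_lt (h1.trans h2)
  have hFw : 0 ≤ F i w := by linarith
  -- Step H : build the integer deviation and contradict the equilibrium property
  set yz : I → ℤ := Function.update xt i (xt i - 1) with hyz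
  have hyfeas : ∀ j, l j ≤ yz j ∧ yz j ≤ u j := by
    intro j
    by_cases hj : j = i
    · subst hj
      simp only [hyz, Function.update_self]
      exact ⟨by omega, by have := (hxt j).2; omega⟩
    · simp only [hyz, Function.update_of_ne hj]
      exact hxt j
  have hyoth : ∀ j, player j ≠ player i → yz j = xt j := by
    intro j hj
    have hji : j ≠ i := fun h => hj (by rw [h])
    simp [hyz, Function.update_of_ne hji]
  have hle := heq (player i) yz hyfeas hyoth
  have hcast : (fun t => (yz t : ℝ)) = Function.update xtr i a := by
    funext k
    by_cases hk : k = i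
    · subst hk
      simp [hyz, ha]
    · simp [hyz, hxtr, Function.update_of_ne hk]
  rw [hcast] at hle
  have haxt : a < (xt i : ℝ) := by rw [ha]; linarith
  have hsl := (hstrict xtr).lt_slope_of_hasDerivAt (Set.mem_univ a)
    (Set.mem_univ ((xt i : ℝ))) haxt (hder xtr a)
  rw [slope_def_field] at hsl
  have hupd : Function.update xtr i ((xt i : ℝ)) = xtr := by
    funext k
    by_cases hk : k = i
    · subst hk; simp [hxtr]
    · simp [Function.update_of_ne hk]
  rw [hupd] at hsl
  have hd1 : (xt i : ℝ) - a = 1 := by rw [ha]; ring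
  rw [hd1, div_one] at hsl
  -- hsl : F i (update xtr i a) < θ (player i) xtr - θ (player i) (update xtr i a)
  have : F i w < θ (player i) xtr - θ (player i) (Function.update xtr i a) := by
    rw [hw]; exact hsl
  linarith
end

section
/- Let X = {x ∈ ℝ^n : l ≤ x ≤ u} with l, u ∈ ℤ^n, and let x̄ ∈ X ∩ ℤ^n be a solution of the continuous NEP. Let player ν and index i be such that: F^ν_i is a concave function, x̄^ν_i = u^ν_i, and for every player μ and index j with (μ,j) ≠ (ν,i), if ∂F^ν_i(x̄)/∂x^μ_j > 0 then x̄^μ_j = u^μ_j, and if ∂F^ν_i(x̄)/∂x^μ_j < 0 then x̄^μ_j = l^μ_j. If θ_ν is strictly convex with respect to x^ν_i, then any x̃ ∈ X ∩ ℤ^n with x̃^ν_i ≠ x̄^ν_i cannot be an equilibrium of the discrete NEP. -/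
open Finset

/-- Proposition 2(ii): fixing a variable at its upper bound.  Variables are
flattened: `I` is the set of all variable indices and `player i` is the player
owning variable `i`.  `F i x` is the partial derivative of `θ (player i)` with
respect to coordinate `i`.  If `x̄ ∈ X ∩ ℤⁿ` solves the continuous NEP (via its
variational characterization), `F i` is concave, `x̄ i` is at its upper bound,
the sign conditions on the partial derivatives of `F i` at `x̄` hold, and
`θ (player i)` is strictly convex in coordinate `i`, then no integer feasible
point differing from `x̄` in coordinate `i` can be a discrete equilibrium. -/
theorem stmt8 {ι : Type*} [DecidableEq ι] {I : Type*} [Fintype I] [DecidableEq I]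
    (player : I → ι) (l u : I → ℤ)
    (θ : ι → (I → ℝ) → ℝ) (F : I → (I → ℝ) → ℝ)
    (hF : ∀ (j : I) (x : I → ℝ),
      HasDerivAt (fun t : ℝ => θ (player j) (Function.update x j t)) (F j x) (x j))
    (xb : I → ℤ) (hxb : ∀ j, l j ≤ xb j ∧ xb j ≤ u j)
    (hVI : ∀ ν, ∀ y : I → ℝ, (∀ j, (l j : ℝ) ≤ y j ∧ y j ≤ (u j : ℝ)) →
      0 ≤ ∑ j ∈ univ.filter (fun j => player j = ν),
            F j (fun t => (xb t : ℝ)) * (y j - (xb j : ℝ)))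
    (i : I)
    (hconc : ConcaveOn ℝ Set.univ (F i))
    (hup : xb i = u i)
    (D : (I → ℝ) →L[ℝ] ℝ) (hD : HasFDerivAt (F i) D (fun t => (xb t : ℝ)))
    (hpos : ∀ j, j ≠ i → 0 < D (Pi.single j 1) → xb j = u j)
    (hneg : ∀ j, j ≠ i → D (Pi.single j 1) < 0 → xb j = l j)
    (hstrict : ∀ x : I → ℝ,
      StrictConvexOn ℝ Set.univ (fun t : ℝ => θ (player i) (Function.update x i t)))
    (xt : I → ℤ) (hxt : ∀ j, l j ≤ xt j ∧ xt j ≤ u j) (hne : xt i ≠ xb i) :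
    ¬ (∀ ν, ∀ y : I → ℤ, (∀ j, l j ≤ y j ∧ y j ≤ u j) →
        (∀ j, player j ≠ ν → y j = xt j) →
        θ ν (fun t => (xt t : ℝ)) ≤ θ ν (fun t => (y t : ℝ))) := by
  intro H
  classical
  set ν := player i with hν
  set xbr : I → ℝ := (fun t => (xb t : ℝ)) with hxbr
  set xtr : I → ℝ := (fun t => (xt t : ℝ)) with hxtr
  have hti : xt i < u i := lt_of_le_of_ne (hxt i).2 (hup ▸ hne)
  have hti1 : xt i + 1 ≤ u i := Int.add_one_le_iff.mpr hti
  -- derivative of the update map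
  have hupd : ∀ (x : I → ℝ) (t₀ : ℝ),
      HasDerivAt (fun t : ℝ => Function.update x i t) (Pi.single i 1) t₀ := by
    intro x t₀
    have heq : (fun t : ℝ => Function.update x i t)
        = fun t => x + (t - x i) • (Pi.single i 1 : I → ℝ) := by
      funext t; funext j
      by_cases hj : j = i
      · subst hj; simp
      · simp [Function.update_of_ne hj, Pi.single_eq_of_ne hj]
    rw [heq]
    simpa using (((hasDerivAt_id t₀).sub_const (x i)).smul_const ((Pi.single i 1 : I → ℝ))).const_add x
  -- partial derivative of θ along coordinate i
  have hg : ∀ (x : I → ℝ) (t : ℝ),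
      HasDerivAt (fun s : ℝ => θ ν (Function.update x i s)) (F i (Function.update x i t)) t := by
    intro x t
    have h := hF i (Function.update x i t)
    simpa [Function.update_idem] using h
  -- Step B : F i xbr ≤ 0
  have hFxb : F i xbr ≤ 0 := by
    have hy : ∀ j, (l j : ℝ) ≤ Function.update xbr i ((u i : ℝ) - 1) j ∧
        Function.update xbr i ((u i : ℝ) - 1) j ≤ (u j : ℝ) := by
      intro j
      by_cases hj : j = i
      · rw [hj, Function.update_self]
        have h1 : (l i : ℝ) ≤ (xt i : ℝ) := by exact_mod_cast (hxt i).1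
        have h2 : (xt i : ℝ) + 1 ≤ (u i : ℝ) := by exact_mod_cast hti1
        constructor <;> linarith
      · simp only [Function.update_of_ne hj, hxbr]
        exact ⟨by exact_mod_cast (hxb j).1, by exact_mod_cast (hxb j).2⟩
    have h := hVI ν _ hy
    rw [Finset.sum_eq_single_of_mem i (by simp [hν])] at h
    · have e1 : Function.update xbr i ((u i : ℝ) - 1) i = (u i : ℝ) - 1 :=
        Function.update_self _ _ _
      have e2 : ((xb i : ℤ) : ℝ) = (u i : ℝ) := by exact_mod_cast congrArg (fun z : ℤ => (z : ℝ)) hup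
      rw [e1, e2] at h
      nlinarith
    · intro j _ hji
      rw [Function.update_of_ne hji]
      simp [hxbr]
  -- Step D : 0 ≤ D (Pi.single i 1)
  have hcomp : HasDerivAt (fun t : ℝ => F i (Function.update xbr i t))
      (D (Pi.single i 1)) ((xb i : ℝ)) := by
    have h2 : Function.update xbr i ((xb i : ℝ)) = xbr := by
      funext j
      by_cases hj : j = i
      · subst hj; simp [hxbr]
      · simp [Function.update_of_ne hj]
    have hD' : HasFDerivAt (F i) D (Function.update xbr i ((xb i : ℝ))) := by
      rw [h2]; exact hD
    have := hD'.comp_hasDerivAt ((xb i : ℝ)) (hupd xbr ((xb i : ℝ)))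
    simpa [Function.comp_def] using this
  have hmono : StrictMono (fun t : ℝ => F i (Function.update xbr i t)) := by
    intro a b hab
    have h1 := (hstrict xbr).lt_slope_of_hasDerivAt (Set.mem_univ a) (Set.mem_univ b) hab
      (hg xbr a)
    have h2 := (hstrict xbr).slope_lt_of_hasDerivAt (Set.mem_univ a) (Set.mem_univ b) hab
      (hg xbr b)
    exact h1.trans h2
  have hDi : 0 ≤ D (Pi.single i 1) := by
    have htend := hasDerivAt_iff_tendsto_slope.mp hcomp
    have htend' : Filter.Tendsto (slope (fun t : ℝ => F i (Function.update xbr i t)) ((xb i:ℝ)))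
        (nhdsWithin ((xb i:ℝ)) (Set.Ioi ((xb i:ℝ)))) (nhds (D (Pi.single i 1))) :=
      htend.mono_left (nhdsWithin_mono _ (fun x hx => ne_of_gt hx))
    refine ge_of_tendsto htend' ?_
    filter_upwards [self_mem_nhdsWithin] with t ht
    rw [slope_def_field]
    have h1 : F i (Function.update xbr i ((xb i:ℝ))) ≤ F i (Function.update xbr i t) :=
      le_of_lt (hmono ht)
    have h2 : (0:ℝ) < t - (xb i:ℝ) := sub_pos.mpr ht
    exact div_nonneg (by linarith) (le_of_lt h2)
  -- Step C : concave tangent inequality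
  have htan : ∀ z : I → ℝ, F i z ≤ F i xbr + D (z - xbr) := by
    intro z
    have hconc' : ConcaveOn ℝ Set.univ (fun t : ℝ => F i (AffineMap.lineMap xbr z t)) := by
      have := hconc.comp_affineMap (AffineMap.lineMap xbr z (k := ℝ))
      simpa [Function.comp_def] using this
    have hconv : ConvexOn ℝ Set.univ (fun t : ℝ => -F i (AffineMap.lineMap xbr z t)) :=
      hconc'.neg
    have hder : HasDerivAt (fun t : ℝ => F i (AffineMap.lineMap xbr z t)) (D (z - xbr)) 0 := by
      have h1 : HasDerivAt (fun t : ℝ => (AffineMap.lineMap xbr z t : I → ℝ)) (z - xbr) 0 := by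
        have : (fun t : ℝ => (AffineMap.lineMap xbr z t : I → ℝ))
            = fun t => t • (z - xbr) + xbr := by
          funext t; rw [AffineMap.lineMap_apply]; simp
        rw [this]
        simpa using ((hasDerivAt_id (0:ℝ)).smul_const (z - xbr)).add_const xbr
      have h0 : (AffineMap.lineMap xbr z (0:ℝ) : I → ℝ) = xbr := by
        rw [AffineMap.lineMap_apply]; simp
      have hD' : HasFDerivAt (F i) D ((AffineMap.lineMap xbr z (0:ℝ) : I → ℝ)) := by
        rw [h0]; exact hD
      have := hD'.comp_hasDerivAt (0:ℝ) h1
      simpa [Function.comp_def] using this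
    have hslope := hconv.le_slope_of_hasDerivAt (Set.mem_univ (0:ℝ)) (Set.mem_univ (1:ℝ))
      one_pos hder.neg
    rw [slope_def_field] at hslope
    simp only [AffineMap.lineMap_apply_one, AffineMap.lineMap_apply_zero, sub_zero, div_one]
      at hslope
    linarith
  -- Step E : D (yR - xbr) ≤ 0
  set yR : I → ℝ := Function.update xtr i ((xt i : ℝ) + 1) with hyRdef
  have hDv : D (yR - xbr) ≤ 0 := by
    have hexp : D (yR - xbr) = ∑ j, (yR j - xbr j) * D (Pi.single j 1) := by
      have hv : (yR - xbr) = ∑ j, (yR j - xbr j) • (Pi.single j 1 : I → ℝ) := by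
        funext k
        simp [Finset.sum_apply, Pi.single_apply]
      rw [hv, map_sum]
      simp [smul_eq_mul]
    rw [hexp]
    refine Finset.sum_nonpos fun j _ => ?_
    by_cases hj : j = i
    · subst hj
      have h1 : yR j ≤ xbr j := by
        have : ((xt j : ℝ) + 1) ≤ (u j : ℝ) := by exact_mod_cast hti1
        simp only [hyRdef, Function.update_self, hxbr, hup]
        exact this
      exact mul_nonpos_of_nonpos_of_nonneg (by linarith) hDi
    · have hyj : yR j = (xt j : ℝ) := by simp [hyRdef, Function.update_of_ne hj, hxtr]
      rcases lt_trichotomy (D (Pi.single j 1)) 0 with hlt | heq | hgt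
      · have hb : xb j = l j := hneg j hj hlt
        have : (0:ℝ) ≤ yR j - xbr j := by
          rw [hyj]; simp only [hxbr, hb]
          have := (hxt j).1
          simp; exact_mod_cast this
        exact mul_nonpos_of_nonneg_of_nonpos this (le_of_lt hlt)
      · rw [heq]; simp
      · have hb : xb j = u j := hpos j hj hgt
        have : yR j - xbr j ≤ 0 := by
          rw [hyj]; simp only [hxbr, hb]
          have := (hxt j).2
          simp; exact_mod_cast this
        exact mul_nonpos_of_nonpos_of_nonneg this (le_of_lt hgt)
  have hFy : F i yR ≤ 0 := by
    have := htan yR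
    linarith
  -- Step F : strict descent
  have hgt : θ ν yR < θ ν xtr := by
    have hd : HasDerivAt (fun s : ℝ => θ ν (Function.update xtr i s)) (F i yR)
        ((xt i : ℝ) + 1) := hg xtr ((xt i : ℝ) + 1)
    have hslope := (hstrict xtr).slope_lt_of_hasDerivAt (Set.mem_univ ((xt i : ℝ)))
      (Set.mem_univ ((xt i : ℝ) + 1)) (by linarith) hd
    rw [slope_def_field] at hslope
    have e0 : Function.update xtr i ((xt i : ℝ)) = xtr := by
      funext j
      by_cases hj : j = i
      · subst hj; simp [hxtr]
      · simp [Function.update_of_ne hj]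
    rw [e0] at hslope
    have : ((xt i : ℝ) + 1) - (xt i : ℝ) = 1 := by ring
    rw [this, div_one] at hslope
    have : θ ν (Function.update xtr i ((xt i : ℝ) + 1)) - θ ν xtr < 0 := by linarith
    simpa [hyRdef] using by linarith [this]
  -- contradiction with equilibrium
  set y : I → ℤ := Function.update xt i (xt i + 1) with hy
  have hfeas : ∀ j, l j ≤ y j ∧ y j ≤ u j := by
    intro j
    by_cases hj : j = i
    · subst hj
      simp only [hy, Function.update_self]
      exact ⟨le_trans (hxt j).1 (by omega), hti1⟩
    · simp only [hy, Function.update_of_ne hj]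
      exact hxt j
  have hoff : ∀ j, player j ≠ ν → y j = xt j := by
    intro j hjν
    have hj : j ≠ i := fun h => hjν (h ▸ rfl)
    simp [hy, Function.update_of_ne hj]
  have hle := H ν y hfeas hoff
  have hcast : (fun t => ((y t : ℤ) : ℝ)) = yR := by
    funext j
    by_cases hj : j = i
    · subst hj; simp [hy, hyRdef]
    · simp [hy, hyRdef, Function.update_of_ne hj, hxtr]
  rw [hcast] at hle
  have : θ ν xtr ≤ θ ν yR := hle
  linarith
end

section
/- Consider the Bertrand-type pricing game with N = 2 firms, where firm ν minimizes b_ν(p^ν)² − c^ν p^{−ν} p^ν − (a_ν + b_ν d_ν)p^ν over integers 0 ≤ p^ν ≤ P_ν, with b_ν > 0. If c¹·c² ≥ 0 in the sense that either both cross-coefficients c¹, c² are nonnegative (substitutes) or both are nonpositive (complements), then the game is 2-groups partitionable and hence has at least one Nash equilibrium. -/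
/-- Objective of firm `ν` in the Bertrand-type pricing game:
`b_ν (pᵛ)² − cᵛ p⁻ᵛ pᵛ − (a_ν + b_ν d_ν) pᵛ`. -/
noncomputable def bertObj (bν cν aν dν : ℝ) (own other : ℤ) : ℝ :=
  bν * (own : ℝ) ^ 2 - cν * (other : ℝ) * (own : ℝ) - (aν + bν * dν) * (own : ℝ)

/-- Quadratic objective `b q² - t q`. -/
noncomputable def qObj (b t : ℝ) (q : ℤ) : ℝ := b * (q : ℝ) ^ 2 - t * (q : ℝ)

/-- Set of minimizers of `qObj b t` on `[0, P]`. -/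
noncomputable def minSet (b t : ℝ) (P : ℤ) : Finset ℤ :=
  @Finset.filter _ (fun q => ∀ r ∈ Finset.Icc 0 P, qObj b t q ≤ qObj b t r)
    (Classical.decPred _) (Finset.Icc 0 P)

lemma mem_minSet {b t : ℝ} {P q : ℤ} :
    q ∈ minSet b t P ↔
      q ∈ Finset.Icc 0 P ∧ ∀ r ∈ Finset.Icc 0 P, qObj b t q ≤ qObj b t r := by
  unfold minSet
  exact @Finset.mem_filter _ _ (Classical.decPred _) _ _

lemma minSet_nonempty (b t : ℝ) {P : ℤ} (hP : 0 ≤ P) : (minSet b t P).Nonempty := by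
  obtain ⟨q, hq, hmin⟩ := Finset.exists_min_image (Finset.Icc 0 P) (qObj b t)
    ⟨0, by simp [hP]⟩
  exact ⟨q, mem_minSet.2 ⟨hq, hmin⟩⟩

/-- Maximal best response. -/
noncomputable def br (b t : ℝ) (P : ℤ) : ℤ :=
  if h : 0 ≤ P then (minSet b t P).max' (minSet_nonempty b t h) else 0

lemma br_mem {b t : ℝ} {P : ℤ} (hP : 0 ≤ P) : br b t P ∈ minSet b t P := by
  rw [br, dif_pos hP]; exact Finset.max'_mem _ _

lemma br_range {b t : ℝ} {P : ℤ} (hP : 0 ≤ P) : 0 ≤ br b t P ∧ br b t P ≤ P := by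
  have := br_mem (b := b) (t := t) hP
  rw [mem_minSet, Finset.mem_Icc] at this
  exact this.1

lemma br_min {b t : ℝ} {P : ℤ} (hP : 0 ≤ P) :
    ∀ r ∈ Finset.Icc 0 P, qObj b t (br b t P) ≤ qObj b t r := by
  have := br_mem (b := b) (t := t) hP
  rw [mem_minSet] at this
  exact this.2

lemma br_le_max {b t : ℝ} {P : ℤ} (hP : 0 ≤ P) {x : ℤ} (hx : x ∈ minSet b t P) :
    x ≤ br b t P := by
  rw [br, dif_pos hP]; exact Finset.le_max' _ _ hx

/-- Monotone comparative statics: the maximal best response is monotone in `t`. -/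
lemma br_mono {b t t' : ℝ} {P : ℤ} (hP : 0 ≤ P) (ht : t ≤ t') :
    br b t P ≤ br b t' P := by
  by_contra h
  push_neg at h
  set x := br b t P
  set x' := br b t' P
  have hxm : x ∈ Finset.Icc 0 P := by
    have := br_range (b := b) (t := t) hP; rw [Finset.mem_Icc]; exact this
  have hx'm : x' ∈ Finset.Icc 0 P := by
    have := br_range (b := b) (t := t') hP; rw [Finset.mem_Icc]; exact this
  have h1 : qObj b t x ≤ qObj b t x' := br_min hP _ hx'm
  have h2 : qObj b t' x' ≤ qObj b t' x := br_min (b := b) (t := t') hP _ hxm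
  -- sum the inequalities
  have hsum : (t' - t) * ((x : ℝ) - x') ≤ 0 := by
    have := add_le_add h1 h2
    simp only [qObj] at this
    nlinarith [this]
  have hxx : (0 : ℝ) < (x : ℝ) - x' := by
    have : (x' : ℝ) < x := by exact_mod_cast h
    linarith
  have htt : t' = t := by
    rcases lt_or_eq_of_le ht with hlt | he
    · nlinarith
    · exact he.symm
  -- then x is also a minimizer for t', contradicting maximality of x'
  have hx'set : x ∈ minSet b t' P := by
    rw [mem_minSet]
    refine ⟨hxm, fun r hr => ?_⟩
    rw [htt]; exact br_min hP r hr
  have := br_le_max hP hx'set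
  omega

/-- Tarski-style fixed point for a monotone map on `[0, P] ∩ ℤ`. -/
lemma monotone_fixed_point (f : ℤ → ℤ) {P : ℤ} (hP : 0 ≤ P)
    (hmono : ∀ p q, p ≤ q → f p ≤ f q)
    (hrange : ∀ p, 0 ≤ p → p ≤ P → 0 ≤ f p ∧ f p ≤ P) :
    ∃ p, 0 ≤ p ∧ p ≤ P ∧ f p = p := by
  set S : Finset ℤ := (Finset.Icc 0 P).filter (fun p => p ≤ f p) with hS
  have hne : S.Nonempty := by
    refine ⟨0, Finset.mem_filter.2 ⟨by simp [hP], ?_⟩⟩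
    exact (hrange 0 le_rfl hP).1
  set p := S.max' hne with hp
  have hpS : p ∈ S := Finset.max'_mem _ _
  rw [hS, Finset.mem_filter, Finset.mem_Icc] at hpS
  obtain ⟨⟨hp0, hpP⟩, hpf⟩ := hpS
  have hfr := hrange p hp0 hpP
  have hfS : f p ∈ S := by
    rw [hS, Finset.mem_filter, Finset.mem_Icc]
    exact ⟨⟨hfr.1, hfr.2⟩, hmono p (f p) hpf⟩
  have : f p ≤ p := Finset.le_max' _ _ hfS
  exact ⟨p, hp0, hpP, le_antisymm this hpf⟩

lemma bertObj_eq (b c a d : ℝ) (own other : ℤ) :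
    bertObj b c a d own other = qObj b (c * (other : ℝ) + (a + b * d)) own := by
  simp [bertObj, qObj]; ring

/-- The two-firm Bertrand pricing game with integer prices in `[0, Pν]`,
`b_ν > 0`, is 2-groups partitionable (the mixed partials `∂F¹/∂p² = −c¹`,
`∂F²/∂p¹ = −c²` satisfy the sign conditions for some partition of the two
firms into groups) whenever the products are both substitutes
(`c¹, c² ≥ 0`) or both complements (`c¹, c² ≤ 0`); hence the game has at
least one Nash equilibrium. -/
theorem stmt15 (b1 b2 c1 c2 a1 a2 d1 d2 : ℝ) (P1 P2 : ℤ)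
    (hb1 : 0 < b1) (hb2 : 0 < b2)
    (ha1 : 0 < a1) (ha2 : 0 < a2)
    (hd1 : 0 < d1 ∧ d1 < a1) (hd2 : 0 < d2 ∧ d2 < a2)
    (hP1 : 0 ≤ P1) (hP2 : 0 ≤ P2)
    (hc : (0 ≤ c1 ∧ 0 ≤ c2) ∨ (c1 ≤ 0 ∧ c2 ≤ 0)) :
    (∃ G1 G2 : Bool,
      (G1 = G2 → -c1 ≤ 0 ∧ -c2 ≤ 0) ∧ (G1 ≠ G2 → 0 ≤ -c1 ∧ 0 ≤ -c2)) ∧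
    ∃ p1 p2 : ℤ, 0 ≤ p1 ∧ p1 ≤ P1 ∧ 0 ≤ p2 ∧ p2 ≤ P2 ∧
      (∀ q : ℤ, 0 ≤ q → q ≤ P1 → bertObj b1 c1 a1 d1 p1 p2 ≤ bertObj b1 c1 a1 d1 q p2) ∧
      (∀ q : ℤ, 0 ≤ q → q ≤ P2 → bertObj b2 c2 a2 d2 p2 p1 ≤ bertObj b2 c2 a2 d2 q p1) := by
  constructor
  · rcases hc with ⟨h1, h2⟩ | ⟨h1, h2⟩
    · exact ⟨true, true, fun _ => ⟨by linarith, by linarith⟩, fun h => absurd rfl h⟩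
    · exact ⟨true, false, fun h => by simp at h, fun _ => ⟨by linarith, by linarith⟩⟩
  · -- best response maps
    set t1 : ℤ → ℝ := fun p => c1 * (p : ℝ) + (a1 + b1 * d1) with ht1
    set t2 : ℤ → ℝ := fun p => c2 * (p : ℝ) + (a2 + b2 * d2) with ht2
    set B1 : ℤ → ℤ := fun p => br b1 (t1 p) P1 with hB1
    set B2 : ℤ → ℤ := fun p => br b2 (t2 p) P2 with hB2
    set f : ℤ → ℤ := fun p => B1 (B2 p) with hf
    have hmono : ∀ p q, p ≤ q → f p ≤ f q := by
      intro p q hpq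
      have hpq' : (p : ℝ) ≤ q := by exact_mod_cast hpq
      rcases hc with ⟨h1, h2⟩ | ⟨h1, h2⟩
      · have h2' : B2 p ≤ B2 q := br_mono hP2 (by simp only [ht2]; nlinarith)
        have : ((B2 p : ℤ) : ℝ) ≤ (B2 q : ℝ) := by exact_mod_cast h2'
        exact br_mono hP1 (by simp only [ht1]; nlinarith)
      · have h2' : B2 q ≤ B2 p := br_mono hP2 (by simp only [ht2]; nlinarith)
        have : ((B2 q : ℤ) : ℝ) ≤ (B2 p : ℝ) := by exact_mod_cast h2'
        exact br_mono hP1 (by simp only [ht1]; nlinarith)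
    have hrange : ∀ p, 0 ≤ p → p ≤ P1 → 0 ≤ f p ∧ f p ≤ P1 := by
      intro p _ _; exact br_range hP1
    obtain ⟨p1, hp10, hp1P, hfix⟩ := monotone_fixed_point f hP1 hmono hrange
    refine ⟨p1, B2 p1, hp10, hp1P, (br_range hP2).1, (br_range hP2).2, ?_, ?_⟩
    · intro q hq0 hqP
      rw [bertObj_eq, bertObj_eq]
      have key := br_min (b := b1) (t := t1 (B2 p1)) hP1 q
        (Finset.mem_Icc.2 ⟨hq0, hqP⟩)
      have hfix' : br b1 (t1 (B2 p1)) P1 = p1 := hfix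
      rw [hfix'] at key
      exact key
    · intro q hq0 hqP
      rw [bertObj_eq, bertObj_eq]
      exact br_min hP2 q (Finset.mem_Icc.2 ⟨hq0, hqP⟩)
end

section
/- In the proof of the Jacobi convergence theorem, the key quadratic inequality holds: let Q ∈ ℝ^{m×m}, let J ⊆ {1,…,m} with complement J̄, and let x, y ∈ ℝ^m. Define ȳ by ȳ_J = y_J, ȳ_{J̄} = x_{J̄} and ỹ by ỹ_J = x_J, ỹ_{J̄} = y_{J̄}. Then [(1/2)ỹᵀQỹ − (1/2)yᵀQy] − [(1/2)xᵀQx − (1/2)ȳᵀQȳ] = (y_{J̄} − x_{J̄})ᵀ Q_{J̄J} (x_J − y_J), where Q is symmetric. Consequently, if for all j ∈ J̄ and i ∈ J the product (y_j − x_j)·Q_{ji}·(x_i − y_i) ≤ 0 termwise, the left-hand side is ≤ 0. -/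
open Finset

/-- The key quadratic exchange identity from the proof of the Jacobi
convergence theorem: for a symmetric `Q`, with `ȳ` taking `y` on `J` and `x`
on `J̄`, and `ỹ` taking `x` on `J` and `y` on `J̄`,
`[(1/2)ỹᵀQỹ − (1/2)yᵀQy] − [(1/2)xᵀQx − (1/2)ȳᵀQȳ]
  = (y_{J̄} − x_{J̄})ᵀ Q_{J̄J} (x_J − y_J)`;
consequently, if each term `(y_j − x_j) Q_{ji} (x_i − y_i)` with `j ∉ J`,
`i ∈ J` is nonpositive, the left-hand side is nonpositive. -/
theorem stmt17 {m : ℕ} (Q : Fin m → Fin m → ℝ) (hQ : ∀ i j, Q i j = Q j i)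
    (J : Finset (Fin m)) (x y : Fin m → ℝ) :
    ((1 / 2) * (∑ i, ∑ j, (fun k => if k ∈ J then x k else y k) i * Q i j *
          (fun k => if k ∈ J then x k else y k) j)
        - (1 / 2) * (∑ i, ∑ j, y i * Q i j * y j))
      - ((1 / 2) * (∑ i, ∑ j, x i * Q i j * x j)
        - (1 / 2) * (∑ i, ∑ j, (fun k => if k ∈ J then y k else x k) i * Q i j *
            (fun k => if k ∈ J then y k else x k) j))
      = ∑ j ∈ Jᶜ, ∑ i ∈ J, (y j - x j) * Q j i * (x i - y i)
    ∧ ((∀ j ∉ J, ∀ i ∈ J, (y j - x j) * Q j i * (x i - y i) ≤ 0) →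
        ((1 / 2) * (∑ i, ∑ j, (fun k => if k ∈ J then x k else y k) i * Q i j *
              (fun k => if k ∈ J then x k else y k) j)
            - (1 / 2) * (∑ i, ∑ j, y i * Q i j * y j))
          - ((1 / 2) * (∑ i, ∑ j, x i * Q i j * x j)
            - (1 / 2) * (∑ i, ∑ j, (fun k => if k ∈ J then y k else x k) i * Q i j *
                (fun k => if k ∈ J then y k else x k) j)) ≤ 0) := by
  classical
  have aux : ∀ (s t : Finset (Fin m)) (f : Fin m → Fin m → ℝ),
      (∑ i : Fin m, ∑ j : Fin m, (if i ∈ s then if j ∈ t then f i j else 0 else 0))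
        = ∑ i ∈ s, ∑ j ∈ t, f i j := by
    intro s t f
    calc (∑ i : Fin m, ∑ j : Fin m, (if i ∈ s then if j ∈ t then f i j else 0 else 0))
        = ∑ i : Fin m, (if i ∈ s then ∑ j : Fin m, (if j ∈ t then f i j else 0) else 0) := by
          refine Finset.sum_congr rfl fun i _ => ?_
          by_cases h : i ∈ s <;> simp [h]
      _ = ∑ i ∈ s, ∑ j ∈ t, f i j := by
          rw [Finset.sum_ite_mem, Finset.univ_inter]
          exact Finset.sum_congr rfl fun i _ => by
            rw [Finset.sum_ite_mem, Finset.univ_inter]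
  have key : ((1 / 2) * (∑ i, ∑ j, (fun k => if k ∈ J then x k else y k) i * Q i j *
          (fun k => if k ∈ J then x k else y k) j)
        - (1 / 2) * (∑ i, ∑ j, y i * Q i j * y j))
      - ((1 / 2) * (∑ i, ∑ j, x i * Q i j * x j)
        - (1 / 2) * (∑ i, ∑ j, (fun k => if k ∈ J then y k else x k) i * Q i j *
            (fun k => if k ∈ J then y k else x k) j))
      = ∑ j ∈ Jᶜ, ∑ i ∈ J, (y j - x j) * Q j i * (x i - y i) := by
    have h1 : ((1 / 2) * (∑ i, ∑ j, (fun k => if k ∈ J then x k else y k) i * Q i j *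
            (fun k => if k ∈ J then x k else y k) j)
          - (1 / 2) * (∑ i, ∑ j, y i * Q i j * y j))
        - ((1 / 2) * (∑ i, ∑ j, x i * Q i j * x j)
          - (1 / 2) * (∑ i, ∑ j, (fun k => if k ∈ J then y k else x k) i * Q i j *
              (fun k => if k ∈ J then y k else x k) j))
        = ∑ i : Fin m, ∑ j : Fin m,
            ((if i ∈ J then if j ∈ Jᶜ then
                (1 / 2) * ((y j - x j) * Q j i * (x i - y i)) else 0 else 0)
           + (if i ∈ Jᶜ then if j ∈ J then
                (1 / 2) * ((y i - x i) * Q i j * (x j - y j)) else 0 else 0)) := by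
      simp only [Finset.mul_sum, ← Finset.sum_sub_distrib, ← Finset.sum_add_distrib]
      refine Finset.sum_congr rfl fun i _ => ?_
      refine Finset.sum_congr rfl fun j _ => ?_
      simp only [Finset.mem_compl]
      by_cases hi : i ∈ J <;> by_cases hj : j ∈ J <;>
        simp only [hi, hj, if_true, if_false, not_true, not_false_iff] <;>
        rw [hQ i j] <;> ring
    rw [h1]
    simp only [Finset.sum_add_distrib]
    rw [aux, aux, Finset.sum_comm, ← Finset.sum_add_distrib]
    refine Finset.sum_congr rfl fun j hj => ?_
    rw [← Finset.sum_add_distrib]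
    refine Finset.sum_congr rfl fun i hi => ?_
    ring
  refine ⟨key, fun h => ?_⟩
  rw [key]
  refine Finset.sum_nonpos fun j hj => Finset.sum_nonpos fun i hi => ?_
  exact h j (Finset.mem_compl.mp hj) i hi
end
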